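/- For real c with 0 < |c|·t < π and t > 0, ((cos(2ct)-1) + 2t²c²·cos(2ct))/(t(cos(2ct)-1) + t²c·sin(2ct)) ≤ 5/t; equivalently, -((cos(2ct)-1) + 2t²c²cos(2ct))/(t(cos(2ct)-1) + t²c·sin(2ct)) ≥ -5/t. -/

import Mathlib

open Real

/-!
Put `x = c t`, `s = sin x`, `k = cos x`. The left side is even in `c`, so we may take
`0 < x < π`, where `s > 0`. The claim becomes `N ≥ 5 D` for `N = cos 2x - 1 + 2x² cos 2x`
and the denominator `D = cos 2x - 1 + x sin 2x = -2s (s - xk) < 0`, and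
`N - 5D = 2((s - xk)(4s - xk) - x²s²)`.
Everything then follows from `x k ≤ (1 - x²/3) s` on `[0, π]`, i.e. `x cot x ≤ 1 - x²/3`:
it gives `s - xk ≥ x²s/3`, so `(s - xk)(4s - xk) ≥ (x²s/3)(3s)`. That bound is proved by
differentiating twice.
-/

lemma monotoneOn_Icc_of_hasDerivAt_nonneg {f f' : ℝ → ℝ} {a b : ℝ}
    (hf : ∀ x, HasDerivAt f (f' x) x) (hf' : ∀ x ∈ Set.Ioo a b, 0 ≤ f' x) :
    MonotoneOn f (Set.Icc a b) :=
  monotoneOn_of_hasDerivWithinAt_nonneg (convex_Icc a b)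
    (fun x _ => (hf x).continuousAt.continuousWithinAt) (fun x _ => (hf x).hasDerivWithinAt)
    (by rwa [interior_Icc])

lemma mul_cos_le_sin {x : ℝ} (h0 : 0 ≤ x) (hπ : x ≤ π) : x * cos x ≤ sin x := by
  have hmono := monotoneOn_Icc_of_hasDerivAt_nonneg (f := fun y => sin y - y * cos y)
    (fun y => ((hasDerivAt_sin y).sub ((hasDerivAt_id' y).mul (hasDerivAt_cos y))).congr_deriv
      (by ring))
    (fun y hy => mul_nonneg hy.1.le (sin_pos_of_pos_of_lt_pi hy.1 hy.2).le)
  have := hmono ⟨le_rfl, pi_pos.le⟩ ⟨h0, hπ⟩ h0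
  norm_num at this
  linarith

/-- The first two terms of `x cot x = 1 - x²/3 - x⁴/45 - ⋯` bound it from above. -/
lemma mul_cos_le_one_sub_sq_div_three_mul_sin {x : ℝ} (h0 : 0 ≤ x) (hπ : x ≤ π) :
    x * cos x ≤ (1 - x ^ 2 / 3) * sin x := by
  have hmono := monotoneOn_Icc_of_hasDerivAt_nonneg
    (f := fun y => (1 - y ^ 2 / 3) * sin y - y * cos y)
    (f' := fun y => y / 3 * (sin y - y * cos y))
    (fun y => ((((hasDerivAt_const y 1).sub ((hasDerivAt_pow 2 y).div_const 3)).mul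
        (hasDerivAt_sin y)).sub ((hasDerivAt_id' y).mul (hasDerivAt_cos y))).congr_deriv
      (by simp only [Pi.sub_apply]; ring))
    (fun y hy => mul_nonneg (by linarith [hy.1]) (sub_nonneg.2 (mul_cos_le_sin hy.1.le hy.2.le)))
  have := hmono ⟨le_rfl, pi_pos.le⟩ ⟨h0, hπ⟩ h0
  norm_num at this
  linarith

lemma cos_two_mul_sub_one_add_mul_sin_two_mul_neg_of_pos_of_lt_pi {x : ℝ} (h0 : 0 < x)
    (hπ : x < π) : cos (2 * x) - 1 + x * sin (2 * x) < 0 := by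
  have hs := sin_pos_of_pos_of_lt_pi h0 hπ
  have hcot := mul_cos_le_one_sub_sq_div_three_mul_sin h0.le hπ.le
  have hgap : 0 < sin x - x * cos x := by nlinarith [mul_pos (pow_pos h0 2) hs]
  have hfactor : cos (2 * x) - 1 + x * sin (2 * x) = -2 * sin x * (sin x - x * cos x) := by
    rw [cos_two_mul, sin_two_mul]
    linear_combination 2 * sin_sq_add_cos_sq x
  rw [hfactor]
  nlinarith [mul_pos hs hgap]

lemma five_mul_cos_two_mul_sub_one_add_mul_sin_two_mul_le {x : ℝ} (h0 : 0 ≤ x)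
    (hπ : x ≤ π) :
    5 * (cos (2 * x) - 1 + x * sin (2 * x)) ≤ cos (2 * x) - 1 + 2 * x ^ 2 * cos (2 * x) := by
  have hs := sin_nonneg_of_nonneg_of_le_pi h0 hπ
  have hcot := mul_cos_le_one_sub_sq_div_three_mul_sin h0 hπ
  have hfactor : cos (2 * x) - 1 + 2 * x ^ 2 * cos (2 * x)
      - 5 * (cos (2 * x) - 1 + x * sin (2 * x))
      = 2 * ((sin x - x * cos x) * (4 * sin x - x * cos x) - x ^ 2 * sin x ^ 2) := by
    rw [cos_two_mul, sin_two_mul]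
    linear_combination (2 * x ^ 2 - 8) * sin_sq_add_cos_sq x
  have hprod : x ^ 2 * sin x ^ 2 ≤ (sin x - x * cos x) * (4 * sin x - x * cos x) := by
    nlinarith [mul_nonneg hs (sq_nonneg x), mul_nonneg hs hs]
  linarith

lemma div_cos_two_mul_sub_one_add_mul_sin_two_mul_le_five {x : ℝ} (h0 : 0 < |x|)
    (hπ : |x| < π) :
    (cos (2 * x) - 1 + 2 * x ^ 2 * cos (2 * x)) / (cos (2 * x) - 1 + x * sin (2 * x)) ≤ 5 := by
  wlog hx : 0 ≤ x generalizing x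
  · simpa [mul_neg, cos_neg, sin_neg] using
      this (x := -x) (by simpa using h0) (by simpa using hπ) (by linarith)
  rw [abs_of_nonneg hx] at h0 hπ
  exact (div_le_iff_of_neg (cos_two_mul_sub_one_add_mul_sin_two_mul_neg_of_pos_of_lt_pi h0 hπ)).2
    (five_mul_cos_two_mul_sub_one_add_mul_sin_two_mul_le hx hπ.le)

theorem scalar_trace_estimate_general (c t : ℝ) (h1 : 0 < |c| * t) (h2 : |c| * t < π) :
    ((Real.cos (2 * c * t) - 1) + 2 * t ^ 2 * c ^ 2 * Real.cos (2 * c * t)) /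
        (t * (Real.cos (2 * c * t) - 1) + t ^ 2 * c * Real.sin (2 * c * t)) ≤ 5 / t := by
  have ht : 0 < t := pos_of_mul_pos_right h1 (abs_nonneg c)
  have hct : |c * t| = |c| * t := by rw [abs_mul, abs_of_pos ht]
  have hratio := div_cos_two_mul_sub_one_add_mul_sin_two_mul_le_five (x := c * t)
    (hct ▸ h1) (hct ▸ h2)
  calc _ = (cos (2 * (c * t)) - 1 + 2 * (c * t) ^ 2 * cos (2 * (c * t))) /
        (cos (2 * (c * t)) - 1 + c * t * sin (2 * (c * t))) / t := by
          rw [div_div, ← mul_assoc]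
          ring
    _ ≤ 5 / t := div_le_div_of_nonneg_right hratio ht.le

/-- The scalar inequality (after taking `b → 0`) in the proof of
`tr F₁(1-t) ≥ -5/t` on the Heisenberg group. -/
theorem scalar_trace_estimate (c t : ℝ) (h1 : 0 < |c| * t) (h2 : |c| * t < π)
    (ht : 0 < t) :
    ((Real.cos (2 * c * t) - 1) + 2 * t ^ 2 * c ^ 2 * Real.cos (2 * c * t)) /
        (t * (Real.cos (2 * c * t) - 1) + t ^ 2 * c * Real.sin (2 * c * t)) ≤ 5 / t :=
  scalar_trace_estimate_general c t h1 h2
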